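/- Let a0, c, mu0, mu1 > 0, b ∈ ℝ, and σ > a0/(2c). Set E = 3·a0²·mu1² − 2·a0·b·mu1 − 4·a0·mu0 − b² + 4·a0 and assume E·(c·σ − a0) > 0. Define B = (a0·mu1 − b)/(2·a0), ω = −(a0·mu1² − b·mu1 − mu0 + σ)·mu1, λ = √(E/(16·a0·(c·σ − a0))), d0 = √(2·c·σ − a0)·E/(4·√a0·(a0 − c·σ)), d2 = 3·√(2·c·σ − a0)·E/(8·√a0·(c·σ − a0)), h2 = 3·E/(8·(c·σ − a0)), and h0 = (3·a0²·c·mu1²·σ − 3·a0³·mu1² − 2·a0·b·c·mu1·σ + 2·a0²·b·mu1 − 4·a0·c·mu0·σ + 4·a0·c·σ² − b²·c·σ + 4·a0²·mu0 − 4·a0²·σ + a0·b²)/(4·a0·(c·σ − a0)). Then f(ξ) = d0 + d2·sech²(λ·ξ) and g(ξ) = h0 + h2·sech²(λ·ξ) satisfy the Schrödinger KdV–BBM associated ODE system with parameters a0, c, mu0, mu1, b, wave speed σ, and phase shifts B, ω. -/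

import Mathlib

/-! With `S = sech²(λξ)` one has `S' = -2λ tanh(λξ) S` and, since `tanh² = 1 - S`, the closed
equation `S'' = λ²(4S - 6S²)`, hence `S''' = λ²(4 - 12S) S'`. Substituting `f = d0 + d2 S`,
`g = h0 + h2 S` therefore turns equation (ii) into a quadratic polynomial in `S` and equations (i),
(iii) into `S'` times a linear polynomial in `S`; the theorem reduces to the vanishing of these
seven coefficients, which is a rational identity in the parameters once `λ² = E/(16 a0 (cσ - a0))`,
`d2 = -3/2 d0` and `d0² = (2cσ - a0) E² / (16 a0 (cσ - a0)²)` are used. -/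

open Real

theorem Real.hasDerivAt_tanh (x : ℝ) : HasDerivAt tanh ((1 / cosh x) ^ 2) x := by
  have hc : cosh x ≠ 0 := (cosh_pos x).ne'
  have h := (hasDerivAt_sinh x).div (hasDerivAt_cosh x) hc
  rw [show tanh = fun y => sinh y / cosh y from funext tanh_eq_sinh_div_cosh]
  refine h.congr_deriv ?_
  field_simp
  linarith [cosh_sq_sub_sinh_sq x]

theorem Real.tanh_sq_eq_one_sub (x : ℝ) : tanh x ^ 2 = 1 - (1 / cosh x) ^ 2 := by
  have hc : cosh x ≠ 0 := (cosh_pos x).ne'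
  rw [tanh_eq_sinh_div_cosh]
  field_simp
  linarith [cosh_sq_sub_sinh_sq x]

noncomputable def sechSq (lam t : ℝ) : ℝ := (1 / cosh (lam * t)) ^ 2

theorem hasDerivAt_sechSq (lam x : ℝ) :
    HasDerivAt (sechSq lam) (-2 * lam * tanh (lam * x) * sechSq lam x) x := by
  have hc : cosh (lam * x) ≠ 0 := (cosh_pos _).ne'
  have h := (((hasDerivAt_cosh (lam * x)).comp x ((hasDerivAt_id' x).const_mul lam)).inv hc).pow 2
  refine (h.congr_deriv ?_).congr_of_eventuallyEq (.of_forall fun t => ?_)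
  · simp only [Pi.inv_apply, Function.comp_apply, tanh_eq_sinh_div_cosh, sechSq]
    field_simp
    norm_num [hc]
    ring
  · simp [sechSq]

theorem deriv_sechSq (lam : ℝ) :
    deriv (sechSq lam) = fun x => -2 * lam * tanh (lam * x) * sechSq lam x :=
  funext fun x => (hasDerivAt_sechSq lam x).deriv

theorem iteratedDeriv_two_sechSq (lam : ℝ) :
    iteratedDeriv 2 (sechSq lam) = fun x => lam ^ 2 * (4 * sechSq lam x - 6 * sechSq lam x ^ 2) := by
  funext x
  have ht := (hasDerivAt_tanh (lam * x)).comp x ((hasDerivAt_id' x).const_mul lam)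
  have h := (ht.const_mul (-2 * lam)).mul (hasDerivAt_sechSq lam x)
  rw [iteratedDeriv_succ, iteratedDeriv_one, deriv_sechSq]
  refine (h.congr_deriv ?_).deriv
  have htanh := tanh_sq_eq_one_sub (lam * x)
  simp only [Function.comp_apply]
  rw [← sechSq] at htanh ⊢
  linear_combination (4 * lam ^ 2 * sechSq lam x) * htanh

theorem iteratedDeriv_three_sechSq (lam x : ℝ) :
    iteratedDeriv 3 (sechSq lam) x = lam ^ 2 * (4 - 12 * sechSq lam x) * deriv (sechSq lam) x := by
  have h := hasDerivAt_sechSq lam x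
  rw [iteratedDeriv_succ, iteratedDeriv_two_sechSq, deriv_sechSq]
  refine ((((h.const_mul 4).sub ((h.pow 2).const_mul 6)).const_mul (lam ^ 2)).congr_deriv ?_).deriv
  ring

/-- The coefficients of `S⁰, S¹, S²` (the subscript) in the sech² ansatz for the system
`f'g + fg' + a0 f''' + K f' = 0`, `P f g + Q f'' + W f = 0`, `f f' + g g' + D g''' + R g' = 0`. -/
structure SechSqBalance (a0 K P Q W D R lam d0 d2 h0 h2 : ℝ) : Prop where
  first₀ : d2 * h0 + d0 * h2 + 4 * a0 * lam ^ 2 * d2 + K * d2 = 0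
  first₁ : d2 * (h2 - 6 * a0 * lam ^ 2) = 0
  second₀ : d0 * (P * h0 + W) = 0
  second₁ : P * (d0 * h2 + d2 * h0) + 4 * Q * lam ^ 2 * d2 + W * d2 = 0
  second₂ : d2 * (P * h2 - 6 * Q * lam ^ 2) = 0
  third₀ : d0 * d2 + h0 * h2 + 4 * D * lam ^ 2 * h2 + R * h2 = 0
  third₁ : d2 ^ 2 + h2 ^ 2 - 12 * D * lam ^ 2 * h2 = 0

theorem SechSqBalance.solves {a0 K P Q W D R lam d0 d2 h0 h2 : ℝ}
    (h : SechSqBalance a0 K P Q W D R lam d0 d2 h0 h2) {f g : ℝ → ℝ}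
    (hf : ∀ t, f t = d0 + d2 * sechSq lam t) (hg : ∀ t, g t = h0 + h2 * sechSq lam t) (ξ : ℝ) :
    (deriv f ξ * g ξ + f ξ * deriv g ξ + a0 * iteratedDeriv 3 f ξ + K * deriv f ξ = 0) ∧
      (P * f ξ * g ξ + Q * iteratedDeriv 2 f ξ + W * f ξ = 0) ∧
      (f ξ * deriv f ξ + g ξ * deriv g ξ + D * iteratedDeriv 3 g ξ + R * deriv g ξ = 0) := by
  rw [funext hf, funext hg]
  simp only [deriv_const_add, deriv_const_mul_field, iteratedDeriv_const_add,
    iteratedDeriv_const_mul_field, Nat.ofNat_pos, iteratedDeriv_three_sechSq,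
    iteratedDeriv_two_sechSq]
  set S := sechSq lam ξ
  set S' := deriv (sechSq lam) ξ
  refine ⟨?_, ?_, ?_⟩
  · linear_combination S' * h.first₀ + 2 * S * S' * h.first₁
  · linear_combination h.second₀ + S * h.second₁ + S ^ 2 * h.second₂
  · linear_combination S' * h.third₀ + S * S' * h.third₁

theorem sechSqBalance_of_params {a0 c mu0 mu1 b σ E B ω lam d0 d2 h0 h2 : ℝ}
    (ha0 : a0 ≠ 0) (hca : c * σ - a0 ≠ 0)
    (hE : E = 3*a0^2*mu1^2 - 2*a0*b*mu1 - 4*a0*mu0 - b^2 + 4*a0)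
    (hB : B = (a0*mu1 - b)/(2*a0)) (hω : ω = -(a0*mu1^2 - b*mu1 - mu0 + σ)*mu1)
    (hlam : lam ^ 2 = E / (16 * a0 * (c * σ - a0)))
    (hd2 : d2 = -(3 / 2) * d0)
    (hd0 : d0 ^ 2 = (2 * c * σ - a0) * E ^ 2 / (16 * a0 * (c * σ - a0) ^ 2))
    (hh2 : h2 = 3*E/(8*(c*σ - a0)))
    (hh0 : h0 = (3*a0^2*c*mu1^2*σ - 3*a0^3*mu1^2 - 2*a0*b*c*mu1*σ + 2*a0^2*b*mu1 - 4*a0*c*mu0*σ + 4*a0*c*σ^2 - b^2*c*σ + 4*a0^2*mu0 - 4*a0^2*σ + a0*b^2)/(4*a0*(c*σ - a0))) :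
    SechSqBalance a0 (mu0 - σ - 3*a0*B^2 - 2*b*B) (B + mu1) (3*a0*B + b)
      (ω + B*mu0 - B*σ - a0*B^3 - b*B^2) (c * σ) (1 - σ) lam d0 d2 h0 h2 := by
  subst hd2 hh2 hh0 hB hω hE
  constructor
  · rw [hlam]; field_simp; ring
  · rw [hlam]; field_simp; ring
  · field_simp; ring
  · rw [hlam]; field_simp; ring
  · rw [hlam]; field_simp; ring
  · rw [hlam]
    linear_combination (norm := skip) (-3 / 2) * hd0
    field_simp
    ring
  · rw [hlam]
    linear_combination (norm := skip) (9 / 4) * hd0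
    field_simp
    ring

theorem stmt_9_general
    (a0 c mu0 mu1 b : ℝ)
    (ha0 : 0 < a0) (hc : 0 < c)
    (σ : ℝ) (hσ : σ > a0/(2*c))
    (E : ℝ) (hE : E = 3*a0^2*mu1^2 - 2*a0*b*mu1 - 4*a0*mu0 - b^2 + 4*a0) (hEsgn : E * (c*σ - a0) > 0)
    (B ω lam d0 d2 h2 h0 : ℝ)
    (h_B : B = (a0*mu1 - b)/(2*a0))
    (h_ω : ω = -(a0*mu1^2 - b*mu1 - mu0 + σ)*mu1)
    (h_lam : lam = Real.sqrt (E/(16*a0*(c*σ - a0))))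
    (h_d0 : d0 = Real.sqrt (2*c*σ - a0)*E/(4*Real.sqrt a0*(a0 - c*σ)))
    (h_d2 : d2 = 3*Real.sqrt (2*c*σ - a0)*E/(8*Real.sqrt a0*(c*σ - a0)))
    (h_h2 : h2 = 3*E/(8*(c*σ - a0)))
    (h_h0 : h0 = (3*a0^2*c*mu1^2*σ - 3*a0^3*mu1^2 - 2*a0*b*c*mu1*σ + 2*a0^2*b*mu1 - 4*a0*c*mu0*σ + 4*a0*c*σ^2 - b^2*c*σ + 4*a0^2*mu0 - 4*a0^2*σ + a0*b^2)/(4*a0*(c*σ - a0)))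
    (f g : ℝ → ℝ)
    (hfdef : ∀ ξ : ℝ, f ξ = d0 + d2 * (1/Real.cosh (lam*ξ))^2)
    (hgdef : ∀ ξ : ℝ, g ξ = h0 + h2 * (1/Real.cosh (lam*ξ))^2) :
    ∀ ξ : ℝ,
      (deriv f ξ * g ξ + f ξ * deriv g ξ + a0 * iteratedDeriv 3 f ξ + (mu0 - σ - 3*a0*B^2 - 2*b*B) * deriv f ξ = 0) ∧
      ((B + mu1) * f ξ * g ξ + (3*a0*B + b) * iteratedDeriv 2 f ξ + (ω + B*mu0 - B*σ - a0*B^3 - b*B^2) * f ξ = 0) ∧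
      (f ξ * deriv f ξ + g ξ * deriv g ξ + (c*σ) * iteratedDeriv 3 g ξ + (1 - σ) * deriv g ξ = 0) := by
  have hca : c * σ - a0 ≠ 0 := by
    intro h
    simp [h] at hEsgn
  have h2ca : 0 ≤ 2 * c * σ - a0 := by
    have := (div_lt_iff₀ (by positivity : (0:ℝ) < 2 * c)).mp hσ
    linarith
  have hlam : lam ^ 2 = E / (16 * a0 * (c * σ - a0)) := by
    have hpos : 0 < E / (c * σ - a0) := div_pos_iff.2 (mul_pos_iff.1 hEsgn)
    rw [h_lam, sq_sqrt]
    rw [div_mul_eq_div_div_swap]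
    exact div_nonneg hpos.le (by positivity)
  have hd2 : d2 = -(3 / 2) * d0 := by
    have hsqrt : √a0 ≠ 0 := (sqrt_pos.2 ha0).ne'
    rw [h_d2, h_d0, ← neg_sub (c * σ)]
    field_simp
    ring
  have hd0 : d0 ^ 2 = (2 * c * σ - a0) * E ^ 2 / (16 * a0 * (c * σ - a0) ^ 2) := by
    rw [h_d0, div_pow, mul_pow, mul_pow, mul_pow, sq_sqrt h2ca, sq_sqrt ha0.le]
    ring
  exact (sechSqBalance_of_params ha0.ne' hca hE h_B h_ω hlam hd2 hd0 h_h2 h_h0).solves hfdef hgdef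

theorem stmt_9
    (a0 c mu0 mu1 b : ℝ)
    (ha0 : 0 < a0) (hc : 0 < c) (hmu0 : 0 < mu0) (hmu1 : 0 < mu1)
    (σ : ℝ) (hσ : σ > a0/(2*c))
    (E : ℝ) (hE : E = 3*a0^2*mu1^2 - 2*a0*b*mu1 - 4*a0*mu0 - b^2 + 4*a0) (hEsgn : E * (c*σ - a0) > 0)
    (B ω lam d0 d2 h2 h0 : ℝ)
    (h_B : B = (a0*mu1 - b)/(2*a0))
    (h_ω : ω = -(a0*mu1^2 - b*mu1 - mu0 + σ)*mu1)
    (h_lam : lam = Real.sqrt (E/(16*a0*(c*σ - a0))))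
    (h_d0 : d0 = Real.sqrt (2*c*σ - a0)*E/(4*Real.sqrt a0*(a0 - c*σ)))
    (h_d2 : d2 = 3*Real.sqrt (2*c*σ - a0)*E/(8*Real.sqrt a0*(c*σ - a0)))
    (h_h2 : h2 = 3*E/(8*(c*σ - a0)))
    (h_h0 : h0 = (3*a0^2*c*mu1^2*σ - 3*a0^3*mu1^2 - 2*a0*b*c*mu1*σ + 2*a0^2*b*mu1 - 4*a0*c*mu0*σ + 4*a0*c*σ^2 - b^2*c*σ + 4*a0^2*mu0 - 4*a0^2*σ + a0*b^2)/(4*a0*(c*σ - a0)))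
    (f g : ℝ → ℝ)
    (hfdef : ∀ ξ : ℝ, f ξ = d0 + d2 * (1/Real.cosh (lam*ξ))^2)
    (hgdef : ∀ ξ : ℝ, g ξ = h0 + h2 * (1/Real.cosh (lam*ξ))^2) :
    ∀ ξ : ℝ,
      (deriv f ξ * g ξ + f ξ * deriv g ξ + a0 * iteratedDeriv 3 f ξ + (mu0 - σ - 3*a0*B^2 - 2*b*B) * deriv f ξ = 0) ∧
      ((B + mu1) * f ξ * g ξ + (3*a0*B + b) * iteratedDeriv 2 f ξ + (ω + B*mu0 - B*σ - a0*B^3 - b*B^2) * f ξ = 0) ∧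
      (f ξ * deriv f ξ + g ξ * deriv g ξ + (c*σ) * iteratedDeriv 3 g ξ + (1 - σ) * deriv g ξ = 0) :=
  stmt_9_general a0 c mu0 mu1 b ha0 hc σ hσ E hE hEsgn B ω lam d0 d2 h2 h0 h_B h_ω h_lam h_d0 h_d2
    h_h2 h_h0 f g hfdef hgdef
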